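/- Let S₁ and S₂ be byte strings. If no merge applied during the run of encode on S₁ ⧺ S₂ crosses position |S₁|, then encode(S₁ ⧺ S₂) = encode(S₁) ⧺ encode(S₂). -/

import Mathlib

/-!
Formalization of a BPE tokenizer with an ordered merge list.

* `σ` is the (finite) byte alphabet, `τ` is the (finite) vocabulary of tokens.
* `base` embeds each byte as a distinct base token.
* `dec` decodes a single token to a byte string; it is extended to token
  sequences by concatenation (`decodeSeq`).
* `merges` is the ordered merge list; each merge `(l, r, n)` replaces an
  adjacent pair `(l, r)` by the single token `n`, and satisfies
  `dec n = dec l ++ dec r`.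
* `encode` turns a byte string into its base tokens and then, processing the
  merges in order, repeatedly replaces the leftmost adjacent occurrence of
  `(l, r)` by `n` until no occurrence remains, before moving to the next merge.
-/

structure BPE (σ τ : Type*) where
  base : σ → τ
  dec : τ → List σ
  merges : List (τ × τ × τ)
  base_inj : Function.Injective base
  dec_base : ∀ b, dec (base b) = [b]
  dec_merge : ∀ m ∈ merges, dec m.2.2 = dec m.1 ++ dec m.2.1

namespace BPE

variable {σ τ : Type*} [DecidableEq τ]

/-- Decode a token sequence by concatenating the decodings of its tokens. -/
def decodeSeq (B : BPE σ τ) (T : List τ) : List σ := (T.map B.dec).flatten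

/-- Replace the leftmost adjacent occurrence of `(l, r)` by `n`, if any,
also returning the starting byte position of the replaced pair. -/
def replaceLeftmost (B : BPE σ τ) (l r n : τ) : List τ → Option (ℕ × List τ)
  | [] => none
  | [_] => none
  | t :: u :: rest =>
      if t = l ∧ u = r then some (0, n :: rest)
      else (B.replaceLeftmost l r n (u :: rest)).map
        (fun p => (p.1 + (B.dec t).length, t :: p.2))

/-- Repeatedly replace the leftmost adjacent occurrence of `(l, r)` by `n`
until no occurrence remains (the fuel, taken to be the length of the list,
suffices since every replacement shortens the list).  Also returns the list
of byte positions at which replacements were performed, in order. -/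
def runMerge (B : BPE σ τ) (l r n : τ) : ℕ → List τ → List τ × List ℕ
  | 0, T => (T, [])
  | fuel + 1, T =>
    match B.replaceLeftmost l r n T with
    | none => (T, [])
    | some (p, T') =>
      let q := B.runMerge l r n fuel T'
      (q.1, p :: q.2)

/-- Process an (indexed) list of merges in order, starting from token sequence
`T`; returns the final token sequence together with the ordered list of merge
applications performed, each recorded as a pair
(index of the merge in the merge list, starting byte position). -/
def encodeRunAux (B : BPE σ τ) : List (ℕ × τ × τ × τ) → List τ → List τ × List (ℕ × ℕ)
  | [], T => (T, [])
  | (i, l, r, n) :: ms, T =>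
    let q := B.runMerge l r n T.length T
    let q' := B.encodeRunAux ms q.1
    (q'.1, q.2.map (fun p => (i, p)) ++ q'.2)

/-- The full run of the BPE encoder on a byte string `S`: the final token
sequence together with the ordered list of merge applications performed. -/
def encodeRun (B : BPE σ τ) (S : List σ) : List τ × List (ℕ × ℕ) :=
  B.encodeRunAux (B.merges.zipIdx.map (fun p => (p.2, p.1))) (S.map B.base)

/-- BPE encoding of a byte string. -/
def encode (B : BPE σ τ) (S : List σ) : List τ := (B.encodeRun S).1

/-- The ordered list of merge applications (merge index, starting byte
position) performed during the run of `encode` on `S`. -/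
def encodeApps (B : BPE σ τ) (S : List σ) : List (ℕ × ℕ) := (B.encodeRun S).2

/-- A token sequence is *valid* if it is the canonical encoding of the byte
string it decodes to. -/
def Valid (B : BPE σ τ) (T : List τ) : Prop := B.encode (B.decodeSeq T) = T

/-- The merge list is in *normal form*:
(i) each token is produced by at most one merge;
(ii) every token `t` satisfies `encode (dec t) = [t]`;
(iii) every merge occurs later in the merge list than the merges producing
each of its two input tokens. -/
def NormalForm (B : BPE σ τ) : Prop :=
  (∀ i j (hi : i < B.merges.length) (hj : j < B.merges.length),
      (B.merges[i]'hi).2.2 = (B.merges[j]'hj).2.2 → i = j) ∧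
  (∀ t : τ, B.encode (B.dec t) = [t]) ∧
  (∀ i j (hi : i < B.merges.length) (hj : j < B.merges.length),
      (B.merges[i]'hi).2.2 = (B.merges[j]'hj).1 ∨
        (B.merges[i]'hi).2.2 = (B.merges[j]'hj).2.1 → i < j)

/-- The merge application `app = (t, p)` *crosses* byte position `c` if the
token it creates (the output of merge `t`, starting at byte position `p`)
has a byte span properly containing `c`. -/
def AppCrosses (B : BPE σ τ) (app : ℕ × ℕ) (c : ℕ) : Prop :=
  ∃ h : app.1 < B.merges.length,
    app.2 < c ∧ c < app.2 + (B.dec (B.merges[app.1]'h).2.2).length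

/-- Some merge applied during the run of `encode` on `S` crosses position `c`. -/
def MergeCrossesInRun (B : BPE σ τ) (S : List σ) (c : ℕ) : Prop :=
  ∃ app ∈ B.encodeApps S, B.AppCrosses app c

/-- The token sequence `U` contains a token whose byte span properly
contains position `c`. -/
def TokenCrosses (B : BPE σ τ) (U : List τ) (c : ℕ) : Prop :=
  ∃ k, k < U.length ∧
    (B.decodeSeq (U.take k)).length < c ∧ c < (B.decodeSeq (U.take (k + 1))).length

end BPE
namespace BPE

variable {σ τ : Type*} [DecidableEq τ]

/-- The *Valid Covering Tree* of a byte string `P`: the set of all nonempty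
token sequences `T = [t₁, …, tₙ]` such that (1) `P` is a prefix of
`decode T`, (2) `decode [t₁, …, t_{n-1}]` is a prefix of `P`, and
(3) `T` is valid. -/
def VCT (B : BPE σ τ) (P : List σ) : Set (List τ) :=
  {T | T ≠ [] ∧ P <+: B.decodeSeq T ∧ B.decodeSeq T.dropLast <+: P ∧ B.Valid T}

/-- The maximal prefix of a token sequence whose total decoded length is at
most `k`, i.e. the tokens whose byte spans end at or before position `k`
(together with their spans, which are determined by the preceding tokens). -/
def spanPrefix (B : BPE σ τ) (k : ℕ) : List τ → List τ
  | [] => []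
  | t :: T =>
      if (B.dec t).length ≤ k then t :: B.spanPrefix (k - (B.dec t).length) T
      else []

/-- `L₀` is a *lookahead bound* for the tokenizer if whenever two byte strings
agree on their first `k + L₀` bytes, the tokens of their encodings whose byte
spans end at or before position `k` coincide (with identical spans). -/
def LookaheadBound (B : BPE σ τ) (L₀ : ℕ) : Prop :=
  ∀ (x x' : List σ) (k : ℕ), x.take (k + L₀) = x'.take (k + L₀) →
    B.spanPrefix k (B.encode x) = B.spanPrefix k (B.encode x')

/-- `U'` is the minimal covering prefix of `U` with respect to `P`: the
shortest prefix of `U` whose decoding has `P` as a prefix. -/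
def IsMinCover (B : BPE σ τ) (P : List σ) (U U' : List τ) : Prop :=
  U' <+: U ∧ P <+: B.decodeSeq U' ∧
    ∀ U'' : List τ, U'' <+: U → P <+: B.decodeSeq U'' → U'.length ≤ U''.length

/-- The pair `(l, r)` occurs adjacently in `T`. -/
def PairAdj (l r : τ) (T : List τ) : Prop := ∃ A C, T = A ++ l :: r :: C

/-- The merge application `a = (t, i)` (merge index `t`, starting byte
position `i` of the left token) is applicable to the token sequence `T`. -/
def Applicable (B : BPE σ τ) (a : ℕ × ℕ) (T : List τ) : Prop :=
  ∃ h : a.1 < B.merges.length, ∃ A C : List τ,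
    T = A ++ (B.merges[a.1]'h).1 :: (B.merges[a.1]'h).2.1 :: C ∧
      (B.decodeSeq A).length = a.2

/-- `T'` is obtained from `T` by performing the merge application `a = (t, i)`:
the input pair of merge `t`, occurring adjacently in `T` with the left token
starting at byte position `i`, is replaced by the output token of merge `t`. -/
def ApplyApp (B : BPE σ τ) (a : ℕ × ℕ) (T T' : List τ) : Prop :=
  ∃ h : a.1 < B.merges.length, ∃ A C : List τ,
    T = A ++ (B.merges[a.1]'h).1 :: (B.merges[a.1]'h).2.1 :: C ∧
      (B.decodeSeq A).length = a.2 ∧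
      T' = A ++ (B.merges[a.1]'h).2.2 :: C

/-- Lexicographic order on merge applications `(t, i)`. -/
def appLE (a a' : ℕ × ℕ) : Prop :=
  a.1 < a'.1 ∨ (a.1 = a'.1 ∧ a.2 ≤ a'.2)

/-- `GreedyChain B T₀ apps T` holds when the sequence of merge applications
`apps` leads from token sequence `T₀` to token sequence `T`, and each applied
application is lexicographically least among those applicable to the current
token sequence. -/
inductive GreedyChain (B : BPE σ τ) : List τ → List (ℕ × ℕ) → List τ → Prop
  | nil (T : List τ) : GreedyChain B T [] T
  | cons {T T' Tf : List τ} {a : ℕ × ℕ} {apps : List (ℕ × ℕ)} :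
      B.ApplyApp a T T' →
      (∀ a', B.Applicable a' T → appLE a a') →
      GreedyChain B T' apps Tf →
      GreedyChain B T (a :: apps) Tf

end BPE

/-!
A phase of `encode` (all replacements by one merge) acts on `U₁ ++ U₂` exactly as on `U₁` and
on `U₂` separately, unless it merges the last token of `U₁` with the first token of `U₂`. All
tokens involved decode to nonempty strings, so such a merge would create a token crossing the
boundary `|decode U₁|`. Ruling it out, induction over the replacements of a phase and then over
the merge list splits the whole run at the boundary.
-/

namespace BPE

section Basic

variable {σ τ : Type*} (B : BPE σ τ)

@[simp]
theorem decodeSeq_nil : B.decodeSeq [] = [] := rfl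

@[simp]
theorem decodeSeq_cons (t : τ) (T : List τ) :
    B.decodeSeq (t :: T) = B.dec t ++ B.decodeSeq T := by
  simp [decodeSeq]

@[simp]
theorem decodeSeq_append (T U : List τ) :
    B.decodeSeq (T ++ U) = B.decodeSeq T ++ B.decodeSeq U := by
  simp [decodeSeq]

theorem decodeSeq_map_base (S : List σ) : B.decodeSeq (S.map B.base) = S := by
  induction S with
  | nil => rfl
  | cons b S ih => simp [ih, B.dec_base]

theorem exists_getElem_merges_of_mem_zipIdx {x : ℕ × τ × τ × τ}
    (hx : x ∈ B.merges.zipIdx.map fun p => (p.2, p.1)) :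
    ∃ h : x.1 < B.merges.length, B.merges[x.1] = x.2 := by
  obtain ⟨p, hp, rfl⟩ := List.mem_map.mp hx
  simpa [List.mem_zipIdx_iff_getElem?, List.getElem?_eq_some_iff] using hp

end Basic

section ReplaceLeftmost

variable {σ τ : Type*} [DecidableEq τ] {B : BPE σ τ} {l r n : τ}

theorem replaceLeftmost_eq_some : ∀ {T T' : List τ} {p : ℕ},
    B.replaceLeftmost l r n T = some (p, T') →
    ∃ A C, T = A ++ l :: r :: C ∧ T' = A ++ n :: C ∧ p = (B.decodeSeq A).length
  | [], _, _, h | [_], _, _, h => by simp [replaceLeftmost] at h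
  | t :: u :: rest, T', p, h => by
    rw [replaceLeftmost] at h
    split_ifs at h with hc
    · obtain ⟨rfl, rfl⟩ := hc
      simp only [Option.some.injEq, Prod.mk.injEq] at h
      obtain ⟨rfl, rfl⟩ := h
      exact ⟨[], rest, rfl, rfl, rfl⟩
    · obtain ⟨⟨p₀, T₀⟩, hsome, heq⟩ := Option.map_eq_some_iff.mp h
      simp only [Prod.mk.injEq] at heq
      obtain ⟨rfl, rfl⟩ := heq
      obtain ⟨A, C, hT, rfl, rfl⟩ := replaceLeftmost_eq_some hsome
      exact ⟨t :: A, C, by simp [hT], rfl, by simp [Nat.add_comm]⟩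

theorem length_of_replaceLeftmost_eq_some {T T' : List τ} {p : ℕ}
    (h : B.replaceLeftmost l r n T = some (p, T')) : T'.length + 1 = T.length := by
  obtain ⟨A, C, rfl, rfl, -⟩ := replaceLeftmost_eq_some h
  simp; omega

theorem decodeSeq_of_replaceLeftmost_eq_some (hd : B.dec n = B.dec l ++ B.dec r)
    {T T' : List τ} {p : ℕ} (h : B.replaceLeftmost l r n T = some (p, T')) :
    B.decodeSeq T' = B.decodeSeq T := by
  obtain ⟨A, C, rfl, rfl, -⟩ := replaceLeftmost_eq_some h
  simp [hd]

theorem dec_ne_nil_of_replaceLeftmost_eq_some (hd : B.dec n = B.dec l ++ B.dec r)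
    {T T' : List τ} {p : ℕ} (h : B.replaceLeftmost l r n T = some (p, T'))
    (hne : ∀ t ∈ T, B.dec t ≠ []) : ∀ t ∈ T', B.dec t ≠ [] := by
  obtain ⟨A, C, rfl, rfl, -⟩ := replaceLeftmost_eq_some h
  simp only [List.mem_append, List.mem_cons] at hne ⊢
  rintro t (ht | rfl | ht)
  · exact hne t (.inl ht)
  · rw [hd]; exact fun h => hne l (.inr (.inl rfl)) (List.append_eq_nil_iff.mp h).1
  · exact hne t (.inr (.inr (.inr ht)))

theorem replaceLeftmost_eq_none_of_cons {t : τ} :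
    ∀ {U : List τ}, B.replaceLeftmost l r n (t :: U) = none → B.replaceLeftmost l r n U = none
  | [], _ => rfl
  | _ :: _, h => by
    rw [replaceLeftmost] at h
    split_ifs at h
    exact Option.map_eq_none_iff.mp h

theorem replaceLeftmost_ne_none_of_pairAdj {T : List τ} (h : PairAdj l r T) :
    B.replaceLeftmost l r n T ≠ none := by
  obtain ⟨A, C, rfl⟩ := h
  induction A with
  | nil => simp [replaceLeftmost]
  | cons t A ih => exact fun h => ih (replaceLeftmost_eq_none_of_cons h)

theorem replaceLeftmost_append_eq_none {U₁ U₂ : List τ}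
    (h : B.replaceLeftmost l r n (U₁ ++ U₂) = none) :
    B.replaceLeftmost l r n U₁ = none ∧ B.replaceLeftmost l r n U₂ = none := by
  refine ⟨Option.eq_none_iff_forall_ne_some.mpr ?_, Option.eq_none_iff_forall_ne_some.mpr ?_⟩
    <;> rintro ⟨p, T'⟩ hsome <;> obtain ⟨A, C, rfl, -, -⟩ := replaceLeftmost_eq_some hsome
  · exact replaceLeftmost_ne_none_of_pairAdj ⟨A, C ++ U₂, by simp⟩ h
  · exact replaceLeftmost_ne_none_of_pairAdj ⟨U₁ ++ A, C, by simp⟩ h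

theorem replaceLeftmost_append_eq_some : ∀ {U₁ U₂ T' : List τ} {p : ℕ},
    B.replaceLeftmost l r n (U₁ ++ U₂) = some (p, T') →
    (∃ p' V₁, B.replaceLeftmost l r n U₁ = some (p', V₁) ∧ T' = V₁ ++ U₂) ∨
    (∃ A C, U₁ = A ++ [l] ∧ U₂ = r :: C ∧ p = (B.decodeSeq A).length) ∨
    (B.replaceLeftmost l r n U₁ = none ∧
      ∃ p' V₂, B.replaceLeftmost l r n U₂ = some (p', V₂) ∧ T' = U₁ ++ V₂)
  | [], U₂, T', p, h => Or.inr (Or.inr ⟨rfl, p, T', h, rfl⟩)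
  | [t], [], _, _, h => by simp [replaceLeftmost] at h
  | [t], u :: rest, T', p, h => by
    rw [List.singleton_append, replaceLeftmost] at h
    split_ifs at h with hc
    · simp only [Option.some.injEq, Prod.mk.injEq] at h
      exact Or.inr (Or.inl ⟨[], rest, by simp [hc.1], by simp [hc.2], by simp [h.1]⟩)
    · obtain ⟨⟨p₀, T₀⟩, hsome, heq⟩ := Option.map_eq_some_iff.mp h
      simp only [Prod.mk.injEq] at heq
      exact Or.inr (Or.inr ⟨rfl, p₀, T₀, hsome, by simp [← heq.2]⟩)
  | t :: u :: rest, U₂, T', p, h => by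
    rw [List.cons_append, List.cons_append, replaceLeftmost] at h
    split_ifs at h with hc
    · simp only [Option.some.injEq, Prod.mk.injEq] at h
      exact Or.inl ⟨p, n :: rest, by simp [replaceLeftmost, hc, h.1], by simp [← h.2]⟩
    · obtain ⟨⟨p₀, T₀⟩, hsome, heq⟩ := Option.map_eq_some_iff.mp h
      simp only [Prod.mk.injEq] at heq
      rw [← List.cons_append] at hsome
      rcases replaceLeftmost_append_eq_some hsome with
        ⟨p', V₁, hV₁, rfl⟩ | ⟨A, C, hU₁, rfl, rfl⟩ | ⟨hnone, p', V₂, hV₂, rfl⟩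
      · exact Or.inl ⟨p' + (B.dec t).length, t :: V₁, by simp [replaceLeftmost, hc, hV₁],
          by simp [← heq.2]⟩
      · exact Or.inr (Or.inl ⟨t :: A, C, by simp [hU₁], rfl,
          by simp [← heq.1, Nat.add_comm]⟩)
      · exact Or.inr (Or.inr ⟨by simp [replaceLeftmost, hc, hnone], p', V₂, hV₂,
          by simp [← heq.2]⟩)

end ReplaceLeftmost

section RunMerge

variable {σ τ : Type*} [DecidableEq τ] {B : BPE σ τ} {l r n : τ}

theorem runMerge_of_replaceLeftmost_eq_none {T : List τ}
    (h : B.replaceLeftmost l r n T = none) (f : ℕ) : B.runMerge l r n f T = (T, []) := by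
  cases f <;> simp [runMerge, h]

theorem runMerge_succ_of_replaceLeftmost_eq_some {T T' : List τ} {p : ℕ}
    (h : B.replaceLeftmost l r n T = some (p, T')) (f : ℕ) :
    B.runMerge l r n (f + 1) T =
      ((B.runMerge l r n f T').1, p :: (B.runMerge l r n f T').2) := by
  simp [runMerge, h]

theorem runMerge_congr_fuel {f₁ f₂ : ℕ} {T : List τ} (h₁ : T.length ≤ f₁)
    (h₂ : T.length ≤ f₂) : B.runMerge l r n f₁ T = B.runMerge l r n f₂ T := by
  cases hrl : B.replaceLeftmost l r n T with
  | none =>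
    rw [runMerge_of_replaceLeftmost_eq_none hrl, runMerge_of_replaceLeftmost_eq_none hrl]
  | some q =>
    obtain ⟨p, T'⟩ := q
    have hlen := length_of_replaceLeftmost_eq_some hrl
    obtain ⟨f₁, rfl⟩ : ∃ g, f₁ = g + 1 := ⟨f₁ - 1, by omega⟩
    obtain ⟨f₂, rfl⟩ : ∃ g, f₂ = g + 1 := ⟨f₂ - 1, by omega⟩
    rw [runMerge_succ_of_replaceLeftmost_eq_some hrl, runMerge_succ_of_replaceLeftmost_eq_some hrl,
      runMerge_congr_fuel (f₁ := f₁) (f₂ := f₂) (T := T') (by omega) (by omega)]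
termination_by T.length
decreasing_by omega

theorem decodeSeq_runMerge_fst (hd : B.dec n = B.dec l ++ B.dec r) (f : ℕ) (T : List τ) :
    B.decodeSeq (B.runMerge l r n f T).1 = B.decodeSeq T := by
  induction f generalizing T with
  | zero => rfl
  | succ f ih =>
    cases hrl : B.replaceLeftmost l r n T with
    | none => rw [runMerge_of_replaceLeftmost_eq_none hrl]
    | some q =>
      rw [runMerge_succ_of_replaceLeftmost_eq_some hrl, ih,
        decodeSeq_of_replaceLeftmost_eq_some hd hrl]

theorem dec_ne_nil_of_mem_runMerge_fst (hd : B.dec n = B.dec l ++ B.dec r) (f : ℕ)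
    {T : List τ} (hne : ∀ t ∈ T, B.dec t ≠ []) :
    ∀ t ∈ (B.runMerge l r n f T).1, B.dec t ≠ [] := by
  induction f generalizing T with
  | zero => exact hne
  | succ f ih =>
    cases hrl : B.replaceLeftmost l r n T with
    | none => rwa [runMerge_of_replaceLeftmost_eq_none hrl]
    | some q =>
      rw [runMerge_succ_of_replaceLeftmost_eq_some hrl]
      exact ih (dec_ne_nil_of_replaceLeftmost_eq_some hd hrl hne)

theorem runMerge_append (hd : B.dec n = B.dec l ++ B.dec r) {f : ℕ} {U₁ U₂ : List τ}
    (hf : (U₁ ++ U₂).length ≤ f) (hne : ∀ t ∈ U₁ ++ U₂, B.dec t ≠ [])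
    (hcross : ∀ p ∈ (B.runMerge l r n f (U₁ ++ U₂)).2,
      ¬(p < (B.decodeSeq U₁).length ∧ (B.decodeSeq U₁).length < p + (B.dec n).length)) :
    (B.runMerge l r n f (U₁ ++ U₂)).1 =
      (B.runMerge l r n f U₁).1 ++ (B.runMerge l r n f U₂).1 := by
  induction f generalizing U₁ U₂ with
  | zero =>
    obtain ⟨rfl, rfl⟩ : U₁ = [] ∧ U₂ = [] := by simpa using hf
    rfl
  | succ f ih =>
    cases hrl : B.replaceLeftmost l r n (U₁ ++ U₂) with
    | none =>
      obtain ⟨h₁, h₂⟩ := replaceLeftmost_append_eq_none hrl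
      simp only [runMerge_of_replaceLeftmost_eq_none, hrl, h₁, h₂]
    | some q =>
      obtain ⟨p, T'⟩ := q
      rw [runMerge_succ_of_replaceLeftmost_eq_some hrl] at hcross ⊢
      have hlen := length_of_replaceLeftmost_eq_some hrl
      have hneT' := dec_ne_nil_of_replaceLeftmost_eq_some hd hrl hne
      rcases replaceLeftmost_append_eq_some hrl with
        ⟨p', V₁, hV₁, rfl⟩ | ⟨A, C, rfl, rfl, rfl⟩ | ⟨hnone, p', V₂, hV₂, rfl⟩
      · have hV₁len := length_of_replaceLeftmost_eq_some hV₁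
        rw [runMerge_succ_of_replaceLeftmost_eq_some hV₁,
          runMerge_congr_fuel (f₁ := f + 1) (f₂ := f) (by simp at hf ⊢; omega)
            (by simp at hf ⊢; omega)]
        rw [← decodeSeq_of_replaceLeftmost_eq_some hd hV₁] at hcross
        exact ih (by simp at hf hlen ⊢; omega) hneT' fun p hp => hcross p (.tail _ hp)
      · -- merging the last token of `U₁` with the first of `U₂` would cross the boundary
        have hl := List.length_pos_iff.mpr (hne l (by simp))
        have hr := List.length_pos_iff.mpr (hne r (by simp))
        exact absurd ⟨by simp; omega, by simp [hd]; omega⟩ (hcross _ List.mem_cons_self)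
      · have := ih (by simp at hf hlen ⊢; omega) hneT' fun p hp => hcross p (.tail _ hp)
        simp only [this, runMerge_of_replaceLeftmost_eq_none hnone,
          runMerge_succ_of_replaceLeftmost_eq_some hV₂]

end RunMerge

section EncodeRun

variable {σ τ : Type*} [DecidableEq τ] {B : BPE σ τ}

theorem encodeRunAux_append {ms : List (ℕ × τ × τ × τ)}
    (hms : ∀ x ∈ ms, ∃ hx : x.1 < B.merges.length, B.merges[x.1] = x.2) {U₁ U₂ : List τ}
    (hne : ∀ t ∈ U₁ ++ U₂, B.dec t ≠ [])
    (hcross : ∀ a ∈ (B.encodeRunAux ms (U₁ ++ U₂)).2,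
      ¬B.AppCrosses a (B.decodeSeq U₁).length) :
    (B.encodeRunAux ms (U₁ ++ U₂)).1 =
      (B.encodeRunAux ms U₁).1 ++ (B.encodeRunAux ms U₂).1 := by
  induction ms generalizing U₁ U₂ with
  | nil => rfl
  | cons m ms ih =>
    obtain ⟨i, l, r, n⟩ := m
    obtain ⟨hi, hm⟩ := hms (i, l, r, n) List.mem_cons_self
    have hd : B.dec n = B.dec l ++ B.dec r := by
      simpa [hm] using B.dec_merge _ (List.getElem_mem hi)
    have hphase := runMerge_append hd le_rfl hne fun p hp hpc =>
      hcross (i, p) (List.mem_append_left _ (List.mem_map_of_mem hp))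
        ⟨hi, by simpa [hm] using hpc⟩
    rw [runMerge_congr_fuel (f₂ := U₁.length) (by simp) le_rfl,
      runMerge_congr_fuel (f₂ := U₂.length) (by simp) le_rfl] at hphase
    have hneV := hphase ▸ dec_ne_nil_of_mem_runMerge_fst hd _ hne
    have hdecV₁ := decodeSeq_runMerge_fst hd U₁.length U₁
    simp only [encodeRunAux, List.mem_append] at hcross ⊢
    rw [hphase] at hcross ⊢
    exact ih (fun x hx => hms x (.tail _ hx)) hneV fun a ha => hdecV₁ ▸ hcross a (.inr ha)

end EncodeRun

end BPE

theorem BPE.encode_append_of_no_crossing_merge_general {σ τ : Type*} [DecidableEq τ]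
    (B : BPE σ τ) (S₁ S₂ : List σ)
    (h : ¬ B.MergeCrossesInRun (S₁ ++ S₂) S₁.length) :
    B.encode (S₁ ++ S₂) = B.encode S₁ ++ B.encode S₂ := by
  have hne : ∀ t ∈ S₁.map B.base ++ S₂.map B.base, B.dec t ≠ [] := by
    rw [← List.map_append, List.forall_mem_map]
    simp [B.dec_base]
  have hcross : ∀ a ∈ (B.encodeRunAux (B.merges.zipIdx.map fun p => (p.2, p.1))
      (S₁.map B.base ++ S₂.map B.base)).2,
      ¬B.AppCrosses a (B.decodeSeq (S₁.map B.base)).length := by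
    rw [decodeSeq_map_base, ← List.map_append]
    exact fun a ha hac => h ⟨a, ha, hac⟩
  have := BPE.encodeRunAux_append (fun _ => B.exists_getElem_merges_of_mem_zipIdx) hne hcross
  rwa [← List.map_append] at this

/-- If no merge applied during the run of `encode` on `S₁ ++ S₂` crosses
position `|S₁|`, then `encode (S₁ ++ S₂) = encode S₁ ++ encode S₂`. -/
theorem BPE.encode_append_of_no_crossing_merge {σ τ : Type*} [DecidableEq τ]
    (B : BPE σ τ) (hNF : B.NormalForm) (S₁ S₂ : List σ)
    (h : ¬ B.MergeCrossesInRun (S₁ ++ S₂) S₁.length) :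
    B.encode (S₁ ++ S₂) = B.encode S₁ ++ B.encode S₂ :=
  BPE.encode_append_of_no_crossing_merge_general B S₁ S₂ h
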